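/- arXiv:1904.10752 — 6 statements merged into one kernel-verified Lean document; each statement's English description precedes it below -/
import Mathlib

section
/- Let V be an n-dimensional complex vector space and a, b ∈ (ℂ*)^n with a_i ≠ b_j for all i, j. If A, B ∈ GL(V) satisfy: the multiset of eigenvalues (with algebraic multiplicity) of A is {a_1,...,a_n}, the multiset of eigenvalues of B is {b_1,...,b_n}, and A∘B⁻¹ is a pseudo-reflection (i.e. rank(1 − A∘B⁻¹) = 1), then there exists a basis of V in which A is represented by the companion matrix of the polynomial ∏(X − a_i) and B is represented by the companion matrix of ∏(X − b_i). -/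
/-!
`B - A` has rank one, so there is `e ≠ 0` with `(B - A) (A ^ j e) = 0` for all `j < n - 1`
(these are `n - 1` linear conditions with values in a line). An `A`-invariant subspace of
`ker (B - A)` would contain an eigenvector of `A` that is an eigenvector of `B` for the same
eigenvalue, which `aᵢ ≠ bⱼ` forbids; hence `e, A e, …, A ^ (n - 1) e` are linearly independent,
as the span of the vectors before a first dependence would be such a subspace. The same vectors
are `e, B e, …, B ^ (n - 1) e`, and in this cyclic basis Cayley–Hamilton makes the matrices of
`A` and `B` the companion matrices of their characteristic polynomials.
-/

open Polynomial

/-- The companion matrix of a monic polynomial of degree `n`: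
1's on the subdiagonal, last column `(-A_n, ..., -A_1)ᵀ` (i.e. row `i` is `-p.coeff i`),
zeros elsewhere. -/
noncomputable def companion (n : ℕ) (p : Polynomial ℂ) : Matrix (Fin n) (Fin n) ℂ :=
  Matrix.of fun i j =>
    if (i : ℕ) = (j : ℕ) + 1 then 1
    else if (j : ℕ) = n - 1 then -p.coeff i
    else 0

open Module Submodule LinearMap

section Krylov

variable {K V : Type*} [Field K] [AddCommGroup V] [Module K V]

theorem LinearMap.exists_ne_zero_forall_lt_apply_pow_apply_eq_zero [FiniteDimensional K V]
    {V₂ : Type*} [AddCommGroup V₂] [Module K V₂] (f : End K V) (g : V →ₗ[K] V₂) {m : ℕ}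
    (h : m * finrank K (range g) < finrank K V) :
    ∃ x ≠ 0, ∀ j < m, g ((f ^ j) x) = 0 := by
  let Φ : V →ₗ[K] Fin m → range g := LinearMap.pi fun j => g.rangeRestrict ∘ₗ f ^ (j : ℕ)
  have hΦ : ker Φ ≠ ⊥ := ker_ne_bot_of_finrank_lt (by simpa [finrank_pi_fintype] using h)
  obtain ⟨x, hx, hx0⟩ := (Submodule.ne_bot_iff _).mp hΦ
  refine ⟨x, hx0, fun j hj => ?_⟩
  simpa [Φ] using congrArg (fun y : Fin m → range g => (y ⟨j, hj⟩ : V₂)) (mem_ker.mp hx)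

theorem Module.End.exists_hasEigenvalue_of_mem_invtSubmodule_of_le_ker_sub [IsAlgClosed K]
    [FiniteDimensional K V] {f g : End K V} {S : Submodule K V} (hS : S ∈ f.invtSubmodule)
    (hSW : S ≤ ker (g - f)) (hS0 : S ≠ ⊥) : ∃ μ, f.HasEigenvalue μ ∧ g.HasEigenvalue μ := by
  have : Nontrivial S := nontrivial_iff_ne_bot.mpr hS0
  obtain ⟨μ, hμ⟩ := Module.End.exists_eigenvalue (f.restrict hS)
  obtain ⟨⟨x, hxS⟩, hx⟩ := hμ.exists_hasEigenvector
  have hfx : f x = μ • x := congrArg Subtype.val hx.apply_eq_smul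
  have hgx : g x = μ • x := by
    rw [← hfx, ← sub_eq_zero, ← LinearMap.sub_apply]; exact hSW hxS
  have hx0 : x ≠ 0 := fun h => hx.2 (Subtype.ext h)
  exact ⟨μ, hasEigenvalue_of_hasEigenvector ⟨mem_eigenspace_iff.mpr hfx, hx0⟩,
    hasEigenvalue_of_hasEigenvector ⟨mem_eigenspace_iff.mpr hgx, hx0⟩⟩

theorem Module.End.span_pow_apply_mem_invtSubmodule {f : End K V} {e : V} {k : ℕ}
    (hk : (f ^ k) e ∈ span K (Set.range fun i : Fin k => (f ^ (i : ℕ)) e)) :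
    span K (Set.range fun i : Fin k => (f ^ (i : ℕ)) e) ∈ f.invtSubmodule := by
  rw [mem_invtSubmodule_iff_map_le, Submodule.map_span, span_le]
  rintro _ ⟨_, ⟨i, rfl⟩, rfl⟩
  rw [← Module.End.mul_apply, ← pow_succ']
  by_cases hi : (i : ℕ) + 1 < k
  · exact subset_span ⟨⟨i + 1, hi⟩, rfl⟩
  · rwa [show (i : ℕ) + 1 = k by omega]

theorem Module.End.linearIndependent_pow_apply {f : End K V} {W : Submodule K V}
    (hW : ∀ S ∈ f.invtSubmodule, S ≤ W → S = ⊥) {e : V} (he : e ≠ 0) {k : ℕ}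
    (hk : ∀ j, j + 1 < k → (f ^ j) e ∈ W) :
    LinearIndependent K fun i : Fin k => (f ^ (i : ℕ)) e := by
  induction k with
  | zero => exact linearIndependent_empty_type
  | succ k ih =>
    have hsnoc : (fun i : Fin (k + 1) => (f ^ (i : ℕ)) e) =
        Fin.snoc (fun i : Fin k => (f ^ (i : ℕ)) e) ((f ^ k) e) := by
      funext i
      refine Fin.lastCases ?_ (fun i => ?_) i <;> simp
    rw [hsnoc, linearIndependent_finSnoc]
    refine ⟨ih fun j hj => hk j (by omega), fun hmem => ?_⟩
    set S := span K (Set.range fun i : Fin k => (f ^ (i : ℕ)) e)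
    have hSW : S ≤ W := span_le.mpr <| by rintro _ ⟨i, rfl⟩; exact hk i (by omega)
    have hS : S = ⊥ := hW S (span_pow_apply_mem_invtSubmodule hmem) hSW
    have heS : e ∈ S := by
      cases k with
      | zero => simpa using hmem
      | succ k => exact subset_span ⟨0, by simp⟩
    exact he (by simpa [hS] using heS)

end Krylov

theorem Module.End.pow_apply_eq_pow_apply_of_forall_lt {R M : Type*} [Semiring R]
    [AddCommMonoid M] [Module R M] {f g : End R M} {e : M} {k : ℕ}
    (h : ∀ j < k, g ((f ^ j) e) = f ((f ^ j) e)) : ∀ j ≤ k, (g ^ j) e = (f ^ j) e := by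
  intro j hj
  induction j with
  | zero => rfl
  | succ j ih => rw [pow_succ', Module.End.mul_apply, ih (by omega), h j (by omega),
      ← Module.End.mul_apply, ← pow_succ']

theorem LinearEquiv.range_sub_eq_range_id_sub_comp_symm {R M : Type*} [Ring R] [AddCommGroup M]
    [Module R M] (A B : M ≃ₗ[R] M) :
    range ((B : End R M) - (A : End R M)) =
      range (LinearMap.id - (A : End R M) ∘ₗ (B.symm : End R M)) := by
  have : (LinearMap.id - (A : End R M) ∘ₗ (B.symm : End R M)) ∘ₗ (B : End R M) =
      (B : End R M) - (A : End R M) := by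
    ext x; simp
  rw [← this, range_comp_of_range_eq_top _ B.range]

section CayleyHamilton

variable {R M : Type*} [CommRing R] [Nontrivial R] [AddCommGroup M] [Module R M]
  [Module.Free R M] [Module.Finite R M]

theorem LinearMap.pow_finrank_apply_eq_neg_sum (f : End R M) (e : M) :
    (f ^ finrank R M) e = -∑ i : Fin (finrank R M), f.charpoly.coeff i • (f ^ (i : ℕ)) e := by
  have hlead : f.charpoly.coeff (finrank R M) = 1 := by
    simpa [f.charpoly_natDegree] using f.charpoly_monic.coeff_natDegree
  have h := congrArg (· e) f.aeval_self_charpoly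
  simp only [aeval_eq_sum_range, f.charpoly_natDegree, Finset.sum_range_succ, hlead, one_smul,
    LinearMap.add_apply, LinearMap.sum_apply, LinearMap.smul_apply,
    LinearMap.zero_apply] at h
  rw [eq_neg_of_add_eq_zero_right h,
    Fin.sum_univ_eq_sum_range (fun i => f.charpoly.coeff i • (f ^ i) e)]

end CayleyHamilton

section Companion

variable {V : Type*} [AddCommGroup V] [Module ℂ V] [FiniteDimensional ℂ V]

theorem LinearMap.toMatrix_eq_companion_charpoly {n : ℕ} (f : End ℂ V)
    (bas : Basis (Fin n) ℂ V) (e : V) (hbas : ∀ i, bas i = (f ^ (i : ℕ)) e) :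
    toMatrix bas bas f = companion n f.charpoly := by
  have hn : finrank ℂ V = n := by simp [finrank_eq_card_basis bas]
  have hcol : ∀ j : Fin n, f (bas j) = if h : (j : ℕ) + 1 < n then bas ⟨j + 1, h⟩
      else -∑ i : Fin n, f.charpoly.coeff i • bas i := by
    intro j
    rw [hbas, ← Module.End.mul_apply, ← pow_succ']
    split_ifs with h
    · rw [hbas]
    · subst hn
      rw [show (j : ℕ) + 1 = finrank ℂ V by omega, f.pow_finrank_apply_eq_neg_sum]
      simp only [hbas]
  ext i j
  rw [toMatrix_apply, hcol]
  split_ifs with h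
  · simp [companion, Finsupp.single_apply, Fin.ext_iff, eq_comm, show (j : ℕ) ≠ n - 1 by omega]
  · simp [companion, Finsupp.single_apply, show (j : ℕ) = n - 1 by omega,
      show (i : ℕ) ≠ n - 1 + 1 by omega]

end Companion

theorem levelt_lemma_general (n : ℕ) (hn : 0 < n) (V : Type) [AddCommGroup V] [Module ℂ V]
    [FiniteDimensional ℂ V] (hdim : Module.finrank ℂ V = n)
    (a b : Fin n → ℂ)
    (hab : ∀ i j, a i ≠ b j)
    (A B : V ≃ₗ[ℂ] V)
    (hA : LinearMap.charpoly (A : V →ₗ[ℂ] V) = ∏ i, (X - C (a i)))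
    (hB : LinearMap.charpoly (B : V →ₗ[ℂ] V) = ∏ i, (X - C (b i)))
    (hps : LinearMap.rank ((LinearMap.id : V →ₗ[ℂ] V)
        - (A : V →ₗ[ℂ] V) ∘ₗ (B.symm : V →ₗ[ℂ] V)) = 1) :
    ∃ bas : Module.Basis (Fin n) ℂ V,
      LinearMap.toMatrix bas bas (A : V →ₗ[ℂ] V) = companion n (∏ i, (X - C (a i))) ∧
      LinearMap.toMatrix bas bas (B : V →ₗ[ℂ] V) = companion n (∏ i, (X - C (b i))) := by
  set fA : End ℂ V := (A : V →ₗ[ℂ] V)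
  set fB : End ℂ V := (B : V →ₗ[ℂ] V)
  have hrank : finrank ℂ (range (fB - fA)) = 1 := by
    rw [← rank_eq_one_iff_finrank_eq_one, A.range_sub_eq_range_id_sub_comp_symm B]
    exact hps
  obtain ⟨e, he, hker⟩ := fA.exists_ne_zero_forall_lt_apply_pow_apply_eq_zero (fB - fA)
    (m := n - 1) (by rw [hrank, hdim]; omega)
  have hW : ∀ S ∈ fA.invtSubmodule, S ≤ ker (fB - fA) → S = ⊥ := by
    intro S hS hSW
    by_contra hS0
    obtain ⟨μ, hμA, hμB⟩ := Module.End.exists_hasEigenvalue_of_mem_invtSubmodule_of_le_ker_sub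
      hS hSW hS0
    rw [Module.End.hasEigenvalue_iff_isRoot_charpoly] at hμA hμB
    simp only [hA, hB, IsRoot, eval_prod, eval_sub, eval_X, eval_C, Finset.prod_eq_zero_iff,
      sub_eq_zero] at hμA hμB
    obtain ⟨i, -, rfl⟩ := hμA
    obtain ⟨j, -, hj⟩ := hμB
    exact hab i j hj
  have hBA : ∀ j ≤ n - 1, (fB ^ j) e = (fA ^ j) e :=
    Module.End.pow_apply_eq_pow_apply_of_forall_lt fun j hj => sub_eq_zero.mp (hker j hj)
  have hli : LinearIndependent ℂ fun i : Fin n => (fA ^ (i : ℕ)) e :=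
    Module.End.linearIndependent_pow_apply hW he fun j hj => hker j (by omega)
  let bas := basisOfLinearIndependentOfCardEqFinrank' _ hli (by simp [hdim])
  have hbas : ∀ i : Fin n, bas i = (fA ^ (i : ℕ)) e := fun i => by simp [bas]
  refine ⟨bas, ?_, ?_⟩
  · rw [← hA]
    exact fA.toMatrix_eq_companion_charpoly bas e hbas
  · rw [← hB]
    exact fB.toMatrix_eq_companion_charpoly bas e fun i => by rw [hbas, hBA i (by omega)]

/-- **Levelt's Lemma.** If `A`, `B` are automorphisms of an `n`-dimensional complex vector
space with characteristic polynomials `∏ (X - aᵢ)` and `∏ (X - bᵢ)` respectively, where all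
`aᵢ, bⱼ` are nonzero and `aᵢ ≠ bⱼ`, and `A ∘ B⁻¹` is a pseudo-reflection, then there is a
basis in which `A` and `B` are simultaneously represented by the companion matrices of their
characteristic polynomials. -/
theorem levelt_lemma (n : ℕ) (hn : 0 < n) (V : Type) [AddCommGroup V] [Module ℂ V]
    [FiniteDimensional ℂ V] (hdim : Module.finrank ℂ V = n)
    (a b : Fin n → ℂ) (ha : ∀ i, a i ≠ 0) (hb : ∀ i, b i ≠ 0)
    (hab : ∀ i j, a i ≠ b j)
    (A B : V ≃ₗ[ℂ] V)
    (hA : LinearMap.charpoly (A : V →ₗ[ℂ] V) = ∏ i, (X - C (a i)))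
    (hB : LinearMap.charpoly (B : V →ₗ[ℂ] V) = ∏ i, (X - C (b i)))
    (hps : LinearMap.rank ((LinearMap.id : V →ₗ[ℂ] V)
        - (A : V →ₗ[ℂ] V) ∘ₗ (B.symm : V →ₗ[ℂ] V)) = 1) :
    ∃ bas : Module.Basis (Fin n) ℂ V,
      LinearMap.toMatrix bas bas (A : V →ₗ[ℂ] V) = companion n (∏ i, (X - C (a i))) ∧
      LinearMap.toMatrix bas bas (B : V →ₗ[ℂ] V) = companion n (∏ i, (X - C (b i))) :=
  levelt_lemma_general n hn V hdim a b hab A B hA hB hps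
end

section
/- Let χ(X) = X^n + C_1 X^{n-1} + ... + C_n ∈ ℂ[X] be monic with χ(1) = 0, i.e. 1 + C_1 + ... + C_n = 0, and let C = companion(χ). Then the image of the linear map 1 − C on ℂ^n equals the hyperplane { x ∈ ℂ^n : x_1 + x_2 + ... + x_n = 0 }. -/
open Polynomial

/-- If `χ` is monic of degree `n` with `χ(1) = 0`, then the image of `1 - companion χ`
on `ℂⁿ` is the hyperplane `{x : ∑ xᵢ = 0}`. -/
theorem image_one_sub_companion (n : ℕ) (hn : 0 < n) (χ : Polynomial ℂ)
    (hmon : χ.Monic) (hdeg : χ.natDegree = n) (hroot : χ.eval 1 = 0) :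
    (Set.range fun x : Fin n → ℂ => (1 - companion n χ).mulVec x)
      = { x : Fin n → ℂ | ∑ i, x i = 0 } := by
  have hcoeffn : χ.coeff n = 1 := by
    have := hmon.leadingCoeff
    rwa [Polynomial.leadingCoeff, hdeg] at this
  have hsum : ∑ i ∈ Finset.range n, χ.coeff i = -1 := by
    have h := hroot
    rw [eval_eq_sum_range, hdeg, Finset.sum_range_succ] at h
    simp only [one_pow, mul_one, hcoeffn] at h
    linear_combination h
  -- column sums of companion matrix are all 1
  have hcol : ∀ j : Fin n, ∑ i, companion n χ i j = 1 := by
    intro j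
    by_cases hj : (j : ℕ) = n - 1
    · have he : ∀ i : Fin n, companion n χ i j = -χ.coeff i := by
        intro i
        have hne : ¬ ((i : ℕ) = (j : ℕ) + 1) := by omega
        simp only [companion, Matrix.of_apply]
        rw [if_neg hne, if_pos hj]
      rw [Finset.sum_congr rfl fun i _ => he i]
      rw [Fin.sum_univ_eq_sum_range (fun k => -χ.coeff k), Finset.sum_neg_distrib, hsum]
      ring
    · have hlt : (j : ℕ) + 1 < n := by omega
      have he : ∀ i : Fin n, companion n χ i j = if i = ⟨(j : ℕ) + 1, hlt⟩ then 1 else 0 := by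
        intro i
        by_cases hi : (i : ℕ) = (j : ℕ) + 1
        · simp [companion, hi, Fin.ext_iff]
        · simp [companion, hi, hj, Fin.ext_iff]
      rw [Finset.sum_congr rfl fun i _ => he i, Finset.sum_ite_eq' (a := (⟨(j:ℕ)+1, hlt⟩ : Fin n))]
      simp
  ext x
  simp only [Set.mem_range, Set.mem_setOf_eq]
  constructor
  · rintro ⟨y, rfl⟩
    simp only [Matrix.mulVec, dotProduct, Matrix.sub_apply, Matrix.one_apply]
    rw [Finset.sum_comm]
    have : ∀ j : Fin n, ∑ i : Fin n,
        ((if i = j then (1:ℂ) else 0) - companion n χ i j) * y j = 0 := by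
      intro j
      rw [← Finset.sum_mul, Finset.sum_sub_distrib, hcol j, Finset.sum_ite_eq']
      simp
    rw [Finset.sum_congr rfl fun j _ => this j]
    simp
  · intro hx
    have hlt' : n - 1 < n := by omega
    refine ⟨fun i => ∑ k ∈ Finset.Iic i, x k, ?_⟩
    have hy0 : ∑ k ∈ Finset.Iic (⟨n - 1, hlt'⟩ : Fin n), x k = 0 := by
      have : Finset.Iic (⟨n - 1, hlt'⟩ : Fin n) = Finset.univ := by
        ext k; simp only [Finset.mem_Iic, Finset.mem_univ, iff_true, Fin.le_def]; omega
      rw [this]; exact hx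
    funext i
    rw [Matrix.sub_mulVec, Matrix.one_mulVec]
    simp only [Pi.sub_apply]
    have hCy : (companion n χ).mulVec (fun i => ∑ k ∈ Finset.Iic i, x k) i
        = ∑ j : Fin n, (if (i : ℕ) = (j : ℕ) + 1 then (1:ℂ) else 0) * ∑ k ∈ Finset.Iic j, x k := by
      unfold Matrix.mulVec dotProduct
      refine Finset.sum_congr rfl fun j _ => ?_
      by_cases hij : (i : ℕ) = (j : ℕ) + 1
      · simp [companion, hij]
      · by_cases hj : (j : ℕ) = n - 1
        · have hje : j = (⟨n - 1, hlt'⟩ : Fin n) := by apply Fin.ext; simpa using hj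
          simp [companion, hij, hj, hje, hy0]
        · simp [companion, hij, hj]
    rw [hCy]
    by_cases hi : (i : ℕ) = 0
    · have hz : ∑ j : Fin n, (if (i : ℕ) = (j : ℕ) + 1 then (1:ℂ) else 0)
          * ∑ k ∈ Finset.Iic j, x k = 0 := by
        apply Finset.sum_eq_zero
        intro j _
        rw [if_neg (by omega), zero_mul]
      rw [hz, sub_zero]
      have hIic : Finset.Iic i = {i} := by
        ext k; simp only [Finset.mem_Iic, Finset.mem_singleton, Fin.le_def, Fin.ext_iff]; omega
      rw [hIic, Finset.sum_singleton]
    · have hprevlt : (i : ℕ) - 1 < n := by omega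
      have he : ∀ j : Fin n, (if (i : ℕ) = (j : ℕ) + 1 then (1:ℂ) else 0) * ∑ k ∈ Finset.Iic j, x k
          = if j = (⟨(i : ℕ) - 1, hprevlt⟩ : Fin n) then
              ∑ k ∈ Finset.Iic (⟨(i : ℕ) - 1, hprevlt⟩ : Fin n), x k else 0 := by
        intro j
        by_cases hij : (i : ℕ) = (j : ℕ) + 1
        · have hje : j = (⟨(i : ℕ) - 1, hprevlt⟩ : Fin n) := by
            apply Fin.ext; show (j : ℕ) = (i : ℕ) - 1; omega
          rw [if_pos hje, if_pos hij, hje, one_mul]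
        · have hje : j ≠ (⟨(i : ℕ) - 1, hprevlt⟩ : Fin n) := by
            intro h
            apply hij
            have : (j : ℕ) = (i : ℕ) - 1 := by rw [h]
            omega
          rw [if_neg hje, if_neg hij, zero_mul]
      rw [Finset.sum_congr rfl fun j _ => he j, Finset.sum_ite_eq']
      simp only [Finset.mem_univ, if_true]
      have hins : Finset.Iic i = insert i (Finset.Iio i) := (Finset.Iio_insert i).symm
      have hio : Finset.Iio i = Finset.Iic (⟨(i : ℕ) - 1, hprevlt⟩ : Fin n) := by
        ext k
        simp only [Finset.mem_Iio, Finset.mem_Iic, Fin.lt_def, Fin.le_def]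
        omega
      rw [hins, Finset.sum_insert (by simp), hio]
      ring
end

section
/- Let λ be a root of multiplicity k of the monic polynomial χ of degree n, let C = companion(χ), and let K_λ be the n×k matrix whose j-th column (j = 0, ..., k−1) is (1/j!) times the j-th derivative with respect to λ of the Horner eigenvector c(λ). Then C·K_λ = K_λ·J_λ, where J_λ is the k×k upper-triangular Jordan block with eigenvalue λ. -/
open Polynomial

/-- The Horner eigenvector of `companion χ`, as a polynomial in the eigenvalue variable:
its `i`-th entry is `∑_{j < n-i} χ.coeff (i+1+j) * X^j`. -/
noncomputable def hornerPoly (n : ℕ) (χ : Polynomial ℂ) (i : Fin n) : Polynomial ℂ :=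
  ∑ j ∈ Finset.range (n - (i : ℕ)), C (χ.coeff ((i : ℕ) + 1 + j)) * X ^ j

/-- The `k×k` upper-triangular Jordan block with eigenvalue `μ`. -/
def jordanBlock (k : ℕ) (μ : ℂ) : Matrix (Fin k) (Fin k) ℂ :=
  Matrix.of fun i j =>
    if (i : ℕ) = (j : ℕ) then μ else if (j : ℕ) = (i : ℕ) + 1 then 1 else 0

lemma sum_if_coe {n : ℕ} (m : ℕ) (hm : m < n) (f : Fin n → ℂ) :
    ∑ l : Fin n, (if (l : ℕ) = m then f l else 0) = f ⟨m, hm⟩ := by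
  rw [Finset.sum_eq_single ⟨m, hm⟩]
  · simp
  · intro b _ hb
    rw [if_neg]
    intro h
    exact hb (Fin.ext h)
  · simp

lemma sum_if_coe_poly {n : ℕ} (m : ℕ) (hm : m < n) (f : Fin n → Polynomial ℂ) :
    ∑ l : Fin n, (if (l : ℕ) = m then f l else 0) = f ⟨m, hm⟩ := by
  rw [Finset.sum_eq_single ⟨m, hm⟩]
  · simp
  · intro b _ hb
    rw [if_neg]
    intro h
    exact hb (Fin.ext h)
  · simp

lemma horner_last (n : ℕ) (χ : Polynomial ℂ) (hn : 0 < n) (hmon : χ.Monic)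
    (hdeg : χ.natDegree = n) : hornerPoly n χ ⟨n-1, by omega⟩ = 1 := by
  unfold hornerPoly
  have h1 : n - (n-1) = 1 := by omega
  rw [h1, Finset.sum_range_one]
  have h2 : n - 1 + 1 + 0 = n := by omega
  rw [h2, pow_zero, mul_one, ← hdeg, hmon.coeff_natDegree, map_one]

lemma horner_succ (n : ℕ) (χ : Polynomial ℂ) (i : ℕ) (h : i + 1 < n) :
    hornerPoly n χ ⟨i, by omega⟩ =
      C (χ.coeff (i+1)) + X * hornerPoly n χ ⟨i+1, h⟩ := by
  unfold hornerPoly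
  have h1 : n - i = (n - (i+1)) + 1 := by omega
  rw [h1, Finset.sum_range_succ', Finset.mul_sum]
  simp only [pow_zero, mul_one]
  rw [add_comm]
  congr 1
  · apply Finset.sum_congr rfl
    intro j _
    have : i + 1 + (j + 1) = i + 1 + 1 + j := by omega
    rw [this, pow_succ]
    ring

lemma chi_eq (n : ℕ) (χ : Polynomial ℂ) (hn : 0 < n) (hdeg : χ.natDegree = n) :
    χ = C (χ.coeff 0) + X * hornerPoly n χ ⟨0, hn⟩ := by
  conv_lhs => rw [χ.as_sum_range' (n+1) (by omega)]
  simp_rw [← C_mul_X_pow_eq_monomial]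
  unfold hornerPoly
  rw [Finset.sum_range_succ', Finset.mul_sum]
  simp only [pow_zero, mul_one]
  rw [add_comm]
  congr 1
  apply Finset.sum_congr rfl
  intro j _
  have : (0:ℕ) + 1 + j = j + 1 := by omega
  rw [this, pow_succ]
  ring

lemma iterDX (p : Polynomial ℂ) : ∀ j : ℕ, derivative^[j+1] (X * p) =
    X * derivative^[j+1] p + (j+1) • derivative^[j] p := by
  intro j
  induction j generalizing p with
  | zero => simp [derivative_mul]; ring
  | succ m ih =>
    have hadd : ∀ q r : Polynomial ℂ, derivative^[m+1] (q + r)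
        = derivative^[m+1] q + derivative^[m+1] r :=
      fun q r => by simp_rw [← Module.End.pow_apply, map_add]
    rw [Function.iterate_succ_apply, derivative_mul, derivative_X, one_mul, hadd,
      ih (derivative p), ← Function.iterate_succ_apply, ← Function.iterate_succ_apply]
    have h2 : derivative^[m+1] p = derivative^[m] (derivative p) :=
      Function.iterate_succ_apply _ _ _
    rw [h2, succ_nsmul]
    ring

lemma companion_horner (n : ℕ) (χ : Polynomial ℂ) (hn : 0 < n) (hmon : χ.Monic)
    (hdeg : χ.natDegree = n) (i : Fin n) :
    ∑ l : Fin n, C (companion n χ i l) * hornerPoly n χ l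
      = X * hornerPoly n χ i - (if (i : ℕ) = 0 then χ else 0) := by
  have hi_lt := i.isLt
  by_cases hi : (i : ℕ) = 0
  · have hterm : ∀ l : Fin n, C (companion n χ i l) * hornerPoly n χ l =
        (if (l : ℕ) = n - 1 then (-C (χ.coeff (i : ℕ))) * hornerPoly n χ l else 0) := by
      intro l
      unfold companion
      simp only [Matrix.of_apply]
      split_ifs with h1 h2 <;> simp_all <;> omega
    rw [Finset.sum_congr rfl (fun l _ => hterm l), sum_if_coe_poly (n-1) (by omega),
      horner_last n χ hn hmon hdeg, if_pos hi]
    have hieq : i = ⟨0, hn⟩ := Fin.ext hi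
    rw [hieq]
    simp only [hi, mul_one]
    linear_combination chi_eq n χ hn hdeg
  · have hterm : ∀ l : Fin n, C (companion n χ i l) * hornerPoly n χ l =
        (if (l : ℕ) = (i : ℕ) - 1 then hornerPoly n χ l else 0)
        + (if (l : ℕ) = n - 1 then (-C (χ.coeff (i : ℕ))) * hornerPoly n χ l else 0) := by
      intro l
      unfold companion
      simp only [Matrix.of_apply]
      split_ifs with h1 h2 h3 h4 h5 <;> first
        | (exfalso; omega)
        | simp
        | (simp; ring)
    rw [Finset.sum_congr rfl (fun l _ => hterm l), Finset.sum_add_distrib,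
      sum_if_coe_poly ((i:ℕ)-1) (by omega), sum_if_coe_poly (n-1) (by omega),
      horner_last n χ hn hmon hdeg, if_neg hi]
    have hs := horner_succ n χ ((i:ℕ)-1) (by omega)
    simp only [show (i:ℕ)-1+1 = (i:ℕ) from by omega] at hs
    rw [hs]
    simp only [Fin.eta]
    ring

/-- If `μ` is a root of multiplicity `k` of the monic degree-`n` polynomial `χ`, and `K` is
the `n×k` matrix whose `j`-th column is `(1/j!)` times the `j`-th derivative (in `μ`) of the
Horner eigenvector, then `companion χ · K = K · J(μ)` with `J(μ)` the `k×k` Jordan block. -/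
theorem companion_mul_generalized_eigen (n k : ℕ) (hn : 0 < n) (hk : 0 < k)
    (χ : Polynomial ℂ) (hmon : χ.Monic) (hdeg : χ.natDegree = n)
    (μ : ℂ) (hmult : (X - C μ) ^ k ∣ χ) :
    companion n χ *
        (Matrix.of fun (i : Fin n) (j : Fin k) =>
          (1 / (Nat.factorial (j : ℕ) : ℂ)) *
            (derivative^[(j : ℕ)] (hornerPoly n χ i)).eval μ)
      = (Matrix.of fun (i : Fin n) (j : Fin k) =>
          (1 / (Nat.factorial (j : ℕ) : ℂ)) *
            (derivative^[(j : ℕ)] (hornerPoly n χ i)).eval μ) * jordanBlock k μ := by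
  have hroot : ∀ m : ℕ, m < k → (derivative^[m] χ).eval μ = 0 := by
    intro m hm
    have hχ0 : χ ≠ 0 := hmon.ne_zero
    have hmle : k ≤ χ.rootMultiplicity μ := (le_rootMultiplicity_iff hχ0).mpr hmult
    exact isRoot_iterate_derivative_of_lt_rootMultiplicity (lt_of_lt_of_le hm hmle)
  ext i j
  simp only [Matrix.mul_apply, Matrix.of_apply]
  -- LHS
  have hL : (∑ l : Fin n, companion n χ i l *
        ((1 / ((j : ℕ).factorial : ℂ)) * (derivative^[(j:ℕ)] (hornerPoly n χ l)).eval μ))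
      = (1 / ((j : ℕ).factorial : ℂ)) *
        (derivative^[(j:ℕ)] (∑ l : Fin n, C (companion n χ i l) * hornerPoly n χ l)).eval μ := by
    rw [iterate_derivative_sum, eval_finset_sum, Finset.mul_sum]
    apply Finset.sum_congr rfl
    intro l _
    rw [iterate_derivative_C_mul, eval_mul, eval_C]
    ring
  rw [hL, companion_horner n χ hn hmon hdeg i]
  have hsub : derivative^[(j:ℕ)] (X * hornerPoly n χ i - (if (i:ℕ) = 0 then χ else 0))
      = derivative^[(j:ℕ)] (X * hornerPoly n χ i)
        - derivative^[(j:ℕ)] (if (i:ℕ) = 0 then χ else 0) := by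
    simp_rw [← Module.End.pow_apply, map_sub]
  rw [hsub, eval_sub]
  have hifz : (derivative^[(j:ℕ)] (if (i:ℕ) = 0 then χ else 0)).eval μ = 0 := by
    by_cases hi0 : (i:ℕ) = 0
    · rw [if_pos hi0]; exact hroot (j:ℕ) j.isLt
    · rw [if_neg hi0]; simp
  rw [hifz, sub_zero]
  -- RHS
  by_cases hj0 : (j:ℕ) = 0
  · have hterm : ∀ l : Fin k,
        ((1 / ((l : ℕ).factorial : ℂ)) * (derivative^[(l:ℕ)] (hornerPoly n χ i)).eval μ)
          * jordanBlock k μ l j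
        = (if (l:ℕ) = (j:ℕ) then
            ((1 / ((l : ℕ).factorial : ℂ)) * (derivative^[(l:ℕ)] (hornerPoly n χ i)).eval μ) * μ
          else 0) := by
      intro l
      unfold jordanBlock
      simp only [Matrix.of_apply]
      split_ifs with h1 h2 <;> first | (exfalso; omega) | ring
    rw [Finset.sum_congr rfl (fun l _ => hterm l), sum_if_coe (j:ℕ) j.isLt]
    simp only [hj0, Function.iterate_zero, id_eq, Nat.factorial_zero, Nat.cast_one, eval_mul,
      eval_X]
    ring
  · obtain ⟨m, hm⟩ : ∃ m, (j:ℕ) = m + 1 := ⟨(j:ℕ)-1, by omega⟩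
    have hterm : ∀ l : Fin k,
        ((1 / ((l : ℕ).factorial : ℂ)) * (derivative^[(l:ℕ)] (hornerPoly n χ i)).eval μ)
          * jordanBlock k μ l j
        = (if (l:ℕ) = (j:ℕ) then
            ((1 / ((l : ℕ).factorial : ℂ)) * (derivative^[(l:ℕ)] (hornerPoly n χ i)).eval μ) * μ
          else 0)
          + (if (l:ℕ) = m then
            ((1 / ((l : ℕ).factorial : ℂ)) * (derivative^[(l:ℕ)] (hornerPoly n χ i)).eval μ)
          else 0) := by
      intro l
      unfold jordanBlock
      simp only [Matrix.of_apply]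
      split_ifs with h1 h2 h3 h4 h5 <;> first | (exfalso; omega) | ring
    rw [Finset.sum_congr rfl (fun l _ => hterm l), Finset.sum_add_distrib,
      sum_if_coe (j:ℕ) j.isLt, sum_if_coe m (by omega)]
    simp only [hm, iterDX, eval_add, eval_mul, eval_X, nsmul_eq_mul, eval_natCast]
    have hfac : ((m.factorial : ℂ)) ≠ 0 := Nat.cast_ne_zero.mpr m.factorial_ne_zero
    have hm1 : ((m : ℂ) + 1) ≠ 0 := Nat.cast_add_one_ne_zero m
    rw [show (((m+1).factorial : ℕ) : ℂ) = ((m : ℂ) + 1) * (m.factorial : ℂ) by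
      push_cast [Nat.factorial_succ]; ring]
    push_cast
    field_simp
end

section
/- Let λ be a root of multiplicity k of the monic polynomial χ of degree n, let C = companion(χ), and let H_λ be the k×n matrix whose rows, from bottom to top, are r(λ), r'(λ), (1/2!)r''(λ), ..., (1/(k−1)!)r^{(k-1)}(λ), where r(λ) = (1, λ, ..., λ^{n-1}). Then H_λ·C = J_λ·H_λ, where J_λ is the k×k upper-triangular Jordan block with eigenvalue λ. -/
open Polynomial

-- entry value lemma
lemma Hval (d m : ℕ) (μ : ℂ) :
    (1 / (Nat.factorial d : ℂ)) * (derivative^[d] (X ^ m : Polynomial ℂ)).eval μ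
      = (m.choose d : ℂ) * μ ^ (m - d) := by
  rw [iterate_derivative_X_pow_eq_natCast_mul]
  have hd : (Nat.factorial d : ℂ) ≠ 0 := Nat.cast_ne_zero.2 d.factorial_ne_zero
  simp [Nat.descFactorial_eq_factorial_mul_choose]
  field_simp

-- pascal-type identity
lemma pascal (e j : ℕ) (μ : ℂ) :
    (((j+1).choose (e+1) : ℂ)) * μ ^ (j + 1 - (e+1))
      = μ * ((j.choose (e+1) : ℂ) * μ ^ (j - (e+1))) + (j.choose e : ℂ) * μ ^ (j - e) := by
  rw [Nat.choose_succ_succ, Nat.cast_add, add_mul, Nat.succ_sub_succ]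
  have : μ * ((j.choose (e+1) : ℂ) * μ ^ (j - (e+1))) = (j.choose (e+1) : ℂ) * μ ^ (j - e) := by
    rcases le_or_gt (e+1) j with h | h
    · have : j - e = (j - (e+1)) + 1 := by omega
      rw [this, pow_succ]; ring
    · have : j.choose (e+1) = 0 := Nat.choose_eq_zero_of_lt h
      simp [this]
  rw [this]; ring

-- the sum identity from the vanishing derivative
lemma chi_sum (n d : ℕ) (μ : ℂ) (χ : Polynomial ℂ) (hdeg : χ.natDegree = n)
    (hroot : (derivative^[d] χ).eval μ = 0) :
    ∑ m ∈ Finset.range (n+1), χ.coeff m *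
      ((1 / (Nat.factorial d : ℂ)) * (derivative^[d] (X ^ m : Polynomial ℂ)).eval μ) = 0 := by
  have hχ : χ = ∑ m ∈ Finset.range (n+1), C (χ.coeff m) * X ^ m := by
    conv_lhs => rw [χ.as_sum_range' (n+1) (by omega)]
    exact Finset.sum_congr rfl fun m _ => by rw [C_mul_X_pow_eq_monomial]
  have h0 : ∑ m ∈ Finset.range (n+1), χ.coeff m *
      (derivative^[d] (X ^ m : Polynomial ℂ)).eval μ = 0 := by
    calc ∑ m ∈ Finset.range (n+1), χ.coeff m * (derivative^[d] (X ^ m : Polynomial ℂ)).eval μ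
        = (derivative^[d] χ).eval μ := by
          conv_rhs => rw [hχ]
          rw [iterate_derivative_sum, eval_finset_sum]
          exact Finset.sum_congr rfl fun m _ => by
            rw [iterate_derivative_C_mul, eval_mul, eval_C]
      _ = 0 := hroot
  calc ∑ m ∈ Finset.range (n+1), χ.coeff m *
      ((1 / (Nat.factorial d : ℂ)) * (derivative^[d] (X ^ m : Polynomial ℂ)).eval μ)
      = (1 / (Nat.factorial d : ℂ)) * ∑ m ∈ Finset.range (n+1), χ.coeff m *
        (derivative^[d] (X ^ m : Polynomial ℂ)).eval μ := by
        rw [Finset.mul_sum]; exact Finset.sum_congr rfl fun m _ => by ring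
    _ = 0 := by rw [h0, mul_zero]

lemma step (k : ℕ) (i : Fin k) (j : ℕ) (μ : ℂ) :
    ((j+1).choose (k-1-(i:ℕ)) : ℂ) * μ ^ (j+1 - (k-1-(i:ℕ)))
      = μ * (((j.choose (k-1-(i:ℕ))) : ℂ) * μ ^ (j - (k-1-(i:ℕ))))
        + (if _ : (i:ℕ)+1 < k then ((j.choose (k-1-((i:ℕ)+1))) : ℂ) *
            μ ^ (j - (k-1-((i:ℕ)+1))) else 0) := by
  by_cases h : (i:ℕ)+1 < k
  · rw [dif_pos h]
    have hd : k-1-(i:ℕ) = (k-1-((i:ℕ)+1)) + 1 := by omega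
    rw [hd]; exact pascal _ j μ
  · rw [dif_neg h]
    have hd : k-1-(i:ℕ) = 0 := by have := i.isLt; omega
    simp [hd, pow_succ]; ring

lemma jordan_sum (k : ℕ) (μ : ℂ) (i : Fin k) (f : Fin k → ℂ) :
    (∑ l : Fin k, jordanBlock k μ i l * f l)
      = μ * f i + (if h : (i:ℕ)+1 < k then f ⟨(i:ℕ)+1, h⟩ else 0) := by
  by_cases h : (i:ℕ)+1 < k
  · rw [dif_pos h]
    have : ∀ l : Fin k, jordanBlock k μ i l * f l
        = (if l = i then μ * f l else 0) + (if l = (⟨(i:ℕ)+1, h⟩ : Fin k) then f l else 0) := by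
      intro l
      simp only [jordanBlock, Matrix.of_apply]
      rcases eq_or_ne l i with rfl | h1
      · rw [if_pos rfl, if_pos rfl, if_neg (by simp [Fin.ext_iff]), add_zero]
      · rw [if_neg (fun hh => h1 (Fin.ext hh.symm)), if_neg h1, zero_add]
        rcases eq_or_ne l (⟨(i:ℕ)+1, h⟩ : Fin k) with rfl | h2
        · rw [if_pos rfl, if_pos rfl, one_mul]
        · rw [if_neg (fun hh => h2 (Fin.ext hh)), if_neg h2, zero_mul]
    rw [Finset.sum_congr rfl fun l _ => this l, Finset.sum_add_distrib,
      Finset.sum_ite_eq' Finset.univ i (fun l => μ * f l),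
      Finset.sum_ite_eq' Finset.univ (⟨(i:ℕ)+1, h⟩ : Fin k) f]
    simp
  · rw [dif_neg h]
    have : ∀ l : Fin k, jordanBlock k μ i l * f l = (if l = i then μ * f l else 0) := by
      intro l
      simp only [jordanBlock, Matrix.of_apply]
      rcases eq_or_ne l i with rfl | h1
      · rw [if_pos rfl, if_pos rfl]
      · rw [if_neg (fun hh => h1 (Fin.ext hh.symm)), if_neg h1,
          if_neg (fun hh : (l:ℕ) = (i:ℕ)+1 => h (hh ▸ l.isLt)), zero_mul]
    rw [Finset.sum_congr rfl fun l _ => this l,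
      Finset.sum_ite_eq' Finset.univ i (fun l => μ * f l)]
    simp


/-- If `μ` is a root of multiplicity `k` of the monic degree-`n` polynomial `χ`, and `H` is
the `k×n` matrix whose rows, from bottom to top, are `r(μ), r'(μ), (1/2!)r''(μ), ...,
(1/(k-1)!)r^{(k-1)}(μ)` with `r(μ) = (1, μ, ..., μ^{n-1})`, then
`H · companion χ = J(μ) · H`. -/
theorem generalized_vandermonde_mul_companion (n k : ℕ) (hn : 0 < n) (hk : 0 < k)
    (χ : Polynomial ℂ) (hmon : χ.Monic) (hdeg : χ.natDegree = n)
    (μ : ℂ) (hmult : (X - C μ) ^ k ∣ χ) :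
    (Matrix.of fun (i : Fin k) (m : Fin n) =>
        (1 / (Nat.factorial (k - 1 - (i : ℕ)) : ℂ)) *
          (derivative^[k - 1 - (i : ℕ)] (X ^ (m : ℕ) : Polynomial ℂ)).eval μ)
        * companion n χ
      = jordanBlock k μ *
        (Matrix.of fun (i : Fin k) (m : Fin n) =>
          (1 / (Nat.factorial (k - 1 - (i : ℕ)) : ℂ)) *
            (derivative^[k - 1 - (i : ℕ)] (X ^ (m : ℕ) : Polynomial ℂ)).eval μ) := by
  ext i j
  rw [Matrix.mul_apply, Matrix.mul_apply, jordan_sum]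
  simp only [Matrix.of_apply, Hval]
  -- the derivative of χ vanishes at μ up to order k-1
  have hχ0 : χ ≠ 0 := hmon.ne_zero
  have hkle : k ≤ χ.rootMultiplicity μ := (le_rootMultiplicity_iff hχ0).2 hmult
  by_cases hj : (j : ℕ) = n - 1
  · -- last column
    have hmj : ∀ m : Fin n, (m : ℕ) ≠ (j : ℕ) + 1 := by
      intro m; have := m.isLt; omega
    have hcomp : ∀ m : Fin n, companion n χ m j = -χ.coeff m := by
      intro m
      simp only [companion, Matrix.of_apply, if_neg (hmj m), if_pos hj]
    rw [Finset.sum_congr rfl fun m _ => by rw [hcomp m]]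
    have hroot : (derivative^[k - 1 - (i:ℕ)] χ).eval μ = 0 :=
      isRoot_iterate_derivative_of_lt_rootMultiplicity
        (lt_of_lt_of_le (by have := i.isLt; omega) hkle)
    have hsum := chi_sum n (k - 1 - (i:ℕ)) μ χ hdeg hroot
    rw [Finset.sum_range_succ] at hsum
    have hcn : χ.coeff n = 1 := by
      have := hmon.coeff_natDegree; rwa [hdeg] at this
    rw [hcn, one_mul] at hsum
    have hfin : ∑ m : Fin n, ((m:ℕ).choose (k - 1 - (i:ℕ)) : ℂ) *
          μ ^ ((m:ℕ) - (k - 1 - (i:ℕ))) * -χ.coeff (m:ℕ)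
        = (1 / ((k - 1 - (i:ℕ)).factorial : ℂ)) *
            (derivative^[k - 1 - (i:ℕ)] (X ^ n : Polynomial ℂ)).eval μ := by
      have := Fin.sum_univ_eq_sum_range (fun m => χ.coeff m *
        ((1 / ((k - 1 - (i:ℕ)).factorial : ℂ)) *
          (derivative^[k - 1 - (i:ℕ)] (X ^ m : Polynomial ℂ)).eval μ)) n
      calc ∑ m : Fin n, ((m:ℕ).choose (k - 1 - (i:ℕ)) : ℂ) *
              μ ^ ((m:ℕ) - (k - 1 - (i:ℕ))) * -χ.coeff (m:ℕ)
          = -∑ m : Fin n, χ.coeff (m:ℕ) *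
              ((1 / ((k - 1 - (i:ℕ)).factorial : ℂ)) *
                (derivative^[k - 1 - (i:ℕ)] (X ^ (m:ℕ) : Polynomial ℂ)).eval μ) := by
            rw [← Finset.sum_neg_distrib]
            exact Finset.sum_congr rfl fun m _ => by rw [Hval]; ring
        _ = _ := by rw [this]; linear_combination -hsum
    rw [hfin, Hval]
    have hn1 : n = (n - 1) + 1 := by omega
    rw [hj]
    calc ((n.choose (k - 1 - (i:ℕ))) : ℂ) * μ ^ (n - (k - 1 - (i:ℕ)))
        = (((n-1)+1).choose (k - 1 - (i:ℕ)) : ℂ) * μ ^ ((n-1)+1 - (k - 1 - (i:ℕ))) := by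
          rw [← hn1]
      _ = _ := by
          rw [step k i (n-1) μ]
  · -- other columns
    have hjn : (j : ℕ) + 1 < n := by have := j.isLt; omega
    have hcomp : ∀ m : Fin n, companion n χ m j
        = if m = (⟨(j:ℕ)+1, hjn⟩ : Fin n) then 1 else 0 := by
      intro m
      simp only [companion, Matrix.of_apply]
      rcases eq_or_ne m (⟨(j:ℕ)+1, hjn⟩ : Fin n) with rfl | h2
      · rw [if_pos rfl, if_pos rfl]
      · rw [if_neg (fun hh => h2 (Fin.ext hh)), if_neg h2, if_neg hj]
    rw [Finset.sum_congr rfl fun m _ => by rw [hcomp m, mul_ite, mul_one, mul_zero],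
      Finset.sum_ite_eq' Finset.univ (⟨(j:ℕ)+1, hjn⟩ : Fin n)]
    simp only [Finset.mem_univ, if_pos]
    have := step k i (j:ℕ) μ
    by_cases h : (i:ℕ)+1 < k
    · rw [dif_pos h] at this ⊢; exact this
    · rw [dif_neg h] at this ⊢; exact this
end

section
/- Let χ_C be a monic polynomial of degree n with distinct roots λ_1, ..., λ_ℓ of multiplicities k_1, ..., k_ℓ, let K⁻¹ be the matrix whose columns are the generalized eigenvector blocks (Horner eigenvectors and their divided derivatives) and H the generalized Vandermonde matrix whose rows are r(λ_j) and its divided derivatives (both as constructed in the paper). Then A := H·K⁻¹ is block-diagonal with blocks A_j (of size k_j) that are upper-triangular Toeplitz, with entries a_{j,k} = (1/(k_j + k)!)·χ_C^{(k_j+k)}(λ_j) for 0 ≤ k ≤ k_j − 1; equivalently, a_{j,k} = (1/k!)·χ_j^{(k)}(λ_j) where χ_j(X) := χ_C(X)/(X − λ_j)^{k_j}. -/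
open Polynomial

namespace HKaux

/-- `eP χ n m` is the `m`-th Horner polynomial, with a natural-number index. -/
noncomputable def eP (χ : Polynomial ℂ) (n m : ℕ) : Polynomial ℂ :=
  ∑ q ∈ Finset.range (n - m), C (χ.coeff (m + 1 + q)) * X ^ q

/-- `WP χ n x a` is the `a`-th Hasse derivative (in the first variable, evaluated at `x`)
of the divided-difference polynomial `(χ(x) - χ(Y))/(x - Y)`, as a polynomial in `Y`. -/
noncomputable def WP (χ : Polynomial ℂ) (n : ℕ) (x : ℂ) (a : ℕ) : Polynomial ℂ :=
  ∑ m ∈ Finset.range n, C ((m.choose a : ℂ) * x ^ (m - a)) * eP χ n m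

lemma eP_coeff (χ : Polynomial ℂ) (n : ℕ) (hdeg : χ.natDegree ≤ n) (m q : ℕ) :
    (eP χ n m).coeff q = χ.coeff (m + 1 + q) := by
  unfold eP
  rw [finset_sum_coeff]
  simp only [coeff_C_mul, coeff_X_pow, mul_ite, mul_one, mul_zero]
  rw [Finset.sum_ite_eq (Finset.range (n - m)) q (fun r => χ.coeff (m + 1 + r))]
  split_ifs with h
  · rfl
  · symm
    apply coeff_eq_zero_of_natDegree_lt
    rw [Finset.mem_range] at h
    omega

lemma WP_coeff (χ : Polynomial ℂ) (n : ℕ) (hdeg : χ.natDegree ≤ n) (x : ℂ) (a q : ℕ) :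
    (WP χ n x a).coeff q
      = ∑ m ∈ Finset.range n, (m.choose a : ℂ) * x ^ (m - a) * χ.coeff (m + 1 + q) := by
  unfold WP
  rw [finset_sum_coeff]
  refine Finset.sum_congr rfl fun m _ => ?_
  rw [coeff_C_mul, eP_coeff χ n hdeg m q, mul_assoc]

lemma hasse_eval (χ : Polynomial ℂ) (n : ℕ) (hdeg : χ.natDegree ≤ n) (a : ℕ) (x : ℂ) :
    (hasseDeriv a χ).eval x
      = ∑ m ∈ Finset.range (n + 1), (m.choose a : ℂ) * χ.coeff m * x ^ (m - a) := by
  conv_lhs => rw [χ.as_sum_range' (n + 1) (Nat.lt_succ_of_le hdeg)]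
  rw [map_sum, eval_finset_sum]
  refine Finset.sum_congr rfl fun m _ => ?_
  rw [hasseDeriv_monomial, eval_monomial]

lemma pascal_term (m a : ℕ) (x : ℂ) :
    x * ((m.choose (a + 1) : ℂ) * x ^ (m - (a + 1))) + (m.choose a : ℂ) * x ^ (m - a)
      = ((m + 1).choose (a + 1) : ℂ) * x ^ (m - a) := by
  rw [Nat.choose_succ_succ' m a]
  rcases le_or_gt (a + 1) m with h | h
  · have hp : m - a = (m - (a + 1)) + 1 := by omega
    rw [hp]
    push_cast
    ring
  · rw [Nat.choose_eq_zero_of_lt h]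
    push_cast
    ring

lemma scal0a (χ : Polynomial ℂ) (N : ℕ) (x : ℂ) (hdeg : χ.natDegree ≤ N + 1) :
    x * ∑ m ∈ Finset.range (N + 1), x ^ m * χ.coeff (m + 1) = χ.eval x - χ.coeff 0 := by
  rw [eval_eq_sum_range' (show χ.natDegree < N + 2 by omega)]
  rw [Finset.sum_range_succ' (fun i => χ.coeff i * x ^ i) (N + 1)]
  rw [pow_zero, mul_one, add_sub_cancel_right, Finset.mul_sum]
  exact Finset.sum_congr rfl fun m _ => by ring

lemma scal0b (χ : Polynomial ℂ) (N : ℕ) (x : ℂ) (q : ℕ) (hdeg : χ.natDegree ≤ N + 1) :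
    x * ∑ m ∈ Finset.range (N + 1), x ^ m * χ.coeff (m + 1 + (q + 1))
      = (∑ m ∈ Finset.range (N + 1), x ^ m * χ.coeff (m + 1 + q)) - χ.coeff (q + 1) := by
  rw [Finset.sum_range_succ' (fun m => x ^ m * χ.coeff (m + 1 + q)) N]
  rw [Finset.mul_sum, Finset.sum_range_succ (fun m => x * (x ^ m * χ.coeff (m + 1 + (q + 1)))) N]
  have hz : χ.coeff (N + 1 + (q + 1)) = 0 := coeff_eq_zero_of_natDegree_lt (by omega)
  rw [hz, mul_zero, mul_zero, add_zero]
  rw [show (0 : ℕ) + 1 + q = q + 1 from by omega, pow_zero, one_mul, add_sub_cancel_right]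
  exact Finset.sum_congr rfl fun m _ => by
    rw [show m + 1 + (q + 1) = m + 1 + 1 + q from by omega]; ring

lemma scalSb (χ : Polynomial ℂ) (N : ℕ) (x : ℂ) (a q : ℕ) (hdeg : χ.natDegree ≤ N + 1) :
    x * ∑ m ∈ Finset.range (N + 1),
        (m.choose (a + 1) : ℂ) * x ^ (m - (a + 1)) * χ.coeff (m + 1 + (q + 1))
      + ∑ m ∈ Finset.range (N + 1), (m.choose a : ℂ) * x ^ (m - a) * χ.coeff (m + 1 + (q + 1))
      = ∑ m ∈ Finset.range (N + 1),
          (m.choose (a + 1) : ℂ) * x ^ (m - (a + 1)) * χ.coeff (m + 1 + q) := by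
  rw [Finset.mul_sum, ← Finset.sum_add_distrib]
  have hL : ∀ m ∈ Finset.range (N + 1),
      x * ((m.choose (a + 1) : ℂ) * x ^ (m - (a + 1)) * χ.coeff (m + 1 + (q + 1)))
        + (m.choose a : ℂ) * x ^ (m - a) * χ.coeff (m + 1 + (q + 1))
      = ((m + 1).choose (a + 1) : ℂ) * x ^ (m - a) * χ.coeff (m + 1 + (q + 1)) := by
    intro m _
    have h := pascal_term m a x
    calc x * ((m.choose (a + 1) : ℂ) * x ^ (m - (a + 1)) * χ.coeff (m + 1 + (q + 1)))
          + (m.choose a : ℂ) * x ^ (m - a) * χ.coeff (m + 1 + (q + 1))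
        = (x * ((m.choose (a + 1) : ℂ) * x ^ (m - (a + 1)))
            + (m.choose a : ℂ) * x ^ (m - a)) * χ.coeff (m + 1 + (q + 1)) := by ring
      _ = ((m + 1).choose (a + 1) : ℂ) * x ^ (m - a) * χ.coeff (m + 1 + (q + 1)) := by
          rw [h]
  rw [Finset.sum_congr rfl hL]
  rw [Finset.sum_range_succ
    (fun m => ((m + 1).choose (a + 1) : ℂ) * x ^ (m - a) * χ.coeff (m + 1 + (q + 1))) N]
  have hz : χ.coeff (N + 1 + (q + 1)) = 0 := coeff_eq_zero_of_natDegree_lt (by omega)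
  rw [hz, mul_zero, add_zero]
  rw [Finset.sum_range_succ'
    (fun m => (m.choose (a + 1) : ℂ) * x ^ (m - (a + 1)) * χ.coeff (m + 1 + q)) N]
  rw [Nat.choose_zero_succ]
  push_cast
  rw [zero_mul, zero_mul, add_zero]
  exact Finset.sum_congr rfl fun m _ => by
    rw [show m + 1 + (q + 1) = m + 1 + 1 + q from by omega]

lemma scalSa (χ : Polynomial ℂ) (N : ℕ) (x : ℂ) (a : ℕ) (hdeg : χ.natDegree ≤ N + 1) :
    x * ∑ m ∈ Finset.range (N + 1),
        (m.choose (a + 1) : ℂ) * x ^ (m - (a + 1)) * χ.coeff (m + 1)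
      + ∑ m ∈ Finset.range (N + 1), (m.choose a : ℂ) * x ^ (m - a) * χ.coeff (m + 1)
      = (hasseDeriv (a + 1) χ).eval x := by
  rw [hasse_eval χ (N + 1) hdeg (a + 1) x]
  rw [Finset.mul_sum, ← Finset.sum_add_distrib]
  rw [Finset.sum_range_succ'
    (fun m => ((m.choose (a + 1) : ℂ)) * χ.coeff m * x ^ (m - (a + 1))) (N + 1)]
  rw [Nat.choose_zero_succ]
  push_cast
  rw [zero_mul, zero_mul, add_zero]
  refine Finset.sum_congr rfl fun m _ => ?_
  have h := pascal_term m a x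
  calc x * ((m.choose (a + 1) : ℂ) * x ^ (m - (a + 1)) * χ.coeff (m + 1))
        + (m.choose a : ℂ) * x ^ (m - a) * χ.coeff (m + 1)
      = (x * ((m.choose (a + 1) : ℂ) * x ^ (m - (a + 1)))
          + (m.choose a : ℂ) * x ^ (m - a)) * χ.coeff (m + 1) := by ring
    _ = ((m + 1).choose (a + 1) : ℂ) * χ.coeff (m + 1) * x ^ (m - a) := by rw [h]; ring

lemma key0 (χ : Polynomial ℂ) (n : ℕ) (hn : 0 < n) (hdeg : χ.natDegree ≤ n) (x : ℂ) :
    (C x - X) * WP χ n x 0 = C (χ.eval x) - χ := by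
  obtain ⟨N, rfl⟩ : ∃ N, n = N + 1 := ⟨n - 1, by omega⟩
  ext q
  rcases q with _ | q
  · rw [mul_coeff_zero, coeff_sub, coeff_C_zero, coeff_X_zero, sub_zero,
      coeff_sub, coeff_C_zero, WP_coeff χ (N + 1) hdeg x 0 0]
    simp only [Nat.choose_zero_right, Nat.cast_one, one_mul, Nat.sub_zero, add_zero]
    exact scal0a χ N x hdeg
  · have hX : ((C x - X) * WP χ (N + 1) x 0).coeff (q + 1)
        = x * (WP χ (N + 1) x 0).coeff (q + 1) - (WP χ (N + 1) x 0).coeff q := by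
      rw [sub_mul, coeff_sub, coeff_C_mul, coeff_X_mul]
    rw [hX, coeff_sub, coeff_C, if_neg (Nat.succ_ne_zero q), zero_sub,
      WP_coeff χ (N + 1) hdeg x 0 (q + 1), WP_coeff χ (N + 1) hdeg x 0 q]
    simp only [Nat.choose_zero_right, Nat.cast_one, one_mul, Nat.sub_zero]
    rw [scal0b χ N x q hdeg]
    ring

lemma keyS (χ : Polynomial ℂ) (n : ℕ) (hn : 0 < n) (hdeg : χ.natDegree ≤ n) (x : ℂ) (a : ℕ) :
    (C x - X) * WP χ n x (a + 1) + WP χ n x a = C ((hasseDeriv (a + 1) χ).eval x) := by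
  obtain ⟨N, rfl⟩ : ∃ N, n = N + 1 := ⟨n - 1, by omega⟩
  ext q
  rcases q with _ | q
  · rw [coeff_add, mul_coeff_zero, coeff_sub, coeff_C_zero, coeff_X_zero, sub_zero,
      coeff_C_zero, WP_coeff χ (N + 1) hdeg x (a + 1) 0, WP_coeff χ (N + 1) hdeg x a 0]
    simp only [add_zero]
    exact scalSa χ N x a hdeg
  · have hX : ((C x - X) * WP χ (N + 1) x (a + 1)).coeff (q + 1)
        = x * (WP χ (N + 1) x (a + 1)).coeff (q + 1) - (WP χ (N + 1) x (a + 1)).coeff q := by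
      rw [sub_mul, coeff_sub, coeff_C_mul, coeff_X_mul]
    rw [coeff_add, hX, coeff_C, if_neg (Nat.succ_ne_zero q),
      WP_coeff χ (N + 1) hdeg x (a + 1) (q + 1), WP_coeff χ (N + 1) hdeg x (a + 1) q,
      WP_coeff χ (N + 1) hdeg x a (q + 1)]
    rw [← scalSb χ N x a q hdeg]
    ring

/-- `Fv χ n x y a b` is the `(a,b)`-th mixed Hasse derivative of the divided difference
`(χ(x)-χ(y))/(x-y)`, at `(x, y)`. -/
noncomputable def Fv (χ : Polynomial ℂ) (n : ℕ) (x y : ℂ) (a b : ℕ) : ℂ :=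
  ((hasseDeriv b) (WP χ n x a)).eval y

lemma taylor_lin (x y : ℂ) (p : Polynomial ℂ) :
    (taylor y) ((C x - X) * p) = (C (x - y) - X) * (taylor y) p := by
  rw [taylor_mul, map_sub, taylor_C, taylor_X, C_sub]
  ring

lemma rec0 (χ : Polynomial ℂ) (n : ℕ) (hn : 0 < n) (hdeg : χ.natDegree ≤ n) (x y : ℂ) :
    (C (x - y) - X) * ((taylor y) (WP χ n x 0)) = C (χ.eval x) - (taylor y) χ := by
  rw [← taylor_lin, key0 χ n hn hdeg x, map_sub, taylor_C]

lemma recS (χ : Polynomial ℂ) (n : ℕ) (hn : 0 < n) (hdeg : χ.natDegree ≤ n) (x y : ℂ)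
    (a : ℕ) :
    (C (x - y) - X) * ((taylor y) (WP χ n x (a + 1))) + (taylor y) (WP χ n x a)
      = C ((hasseDeriv (a + 1) χ).eval x) := by
  rw [← taylor_lin, ← map_add, keyS χ n hn hdeg x a, taylor_C]

lemma rec0a (χ : Polynomial ℂ) (n : ℕ) (hn : 0 < n) (hdeg : χ.natDegree ≤ n) (x y : ℂ) :
    (x - y) * Fv χ n x y 0 0 = χ.eval x - ((hasseDeriv 0) χ).eval y := by
  have h := congrArg (fun p => p.coeff 0) (rec0 χ n hn hdeg x y)
  rw [mul_coeff_zero, coeff_sub, coeff_C_zero, coeff_X_zero, sub_zero, coeff_sub,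
    coeff_C_zero] at h
  simp only [taylor_coeff] at h
  exact h

lemma rec0b (χ : Polynomial ℂ) (n : ℕ) (hn : 0 < n) (hdeg : χ.natDegree ≤ n) (x y : ℂ)
    (b : ℕ) :
    (x - y) * Fv χ n x y 0 (b + 1) - Fv χ n x y 0 b = -((hasseDeriv (b + 1) χ).eval y) := by
  have h := congrArg (fun p => p.coeff (b + 1)) (rec0 χ n hn hdeg x y)
  rw [sub_mul, coeff_sub, coeff_C_mul, coeff_X_mul, coeff_sub, coeff_C,
    if_neg (Nat.succ_ne_zero b), zero_sub] at h
  simp only [taylor_coeff] at h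
  exact h

lemma recSa (χ : Polynomial ℂ) (n : ℕ) (hn : 0 < n) (hdeg : χ.natDegree ≤ n) (x y : ℂ)
    (a : ℕ) :
    (x - y) * Fv χ n x y (a + 1) 0 + Fv χ n x y a 0 = (hasseDeriv (a + 1) χ).eval x := by
  have h := congrArg (fun p => p.coeff 0) (recS χ n hn hdeg x y a)
  rw [coeff_add, mul_coeff_zero, coeff_sub, coeff_C_zero, coeff_X_zero, sub_zero,
    coeff_C_zero] at h
  simp only [taylor_coeff] at h
  exact h

lemma recSb (χ : Polynomial ℂ) (n : ℕ) (hn : 0 < n) (hdeg : χ.natDegree ≤ n) (x y : ℂ)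
    (a b : ℕ) :
    (x - y) * Fv χ n x y (a + 1) (b + 1) - Fv χ n x y (a + 1) b + Fv χ n x y a (b + 1) = 0 := by
  have h := congrArg (fun p => p.coeff (b + 1)) (recS χ n hn hdeg x y a)
  rw [coeff_add, sub_mul, coeff_sub, coeff_C_mul, coeff_X_mul, coeff_C,
    if_neg (Nat.succ_ne_zero b)] at h
  simp only [taylor_coeff] at h
  exact h

lemma diag (χ : Polynomial ℂ) (n : ℕ) (hn : 0 < n) (hdeg : χ.natDegree ≤ n) (x : ℂ) :
    ∀ b a, Fv χ n x x a b = (hasseDeriv (a + b + 1) χ).eval x := by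
  intro b
  induction b with
  | zero =>
    intro a
    have h := recSa χ n hn hdeg x x a
    rw [sub_self, zero_mul, zero_add] at h
    exact h
  | succ b ih =>
    intro a
    have h := recSb χ n hn hdeg x x a b
    rw [sub_self, zero_mul, zero_sub] at h
    have h2 : Fv χ n x x a (b + 1) = Fv χ n x x (a + 1) b := by linear_combination h
    rw [h2, ih (a + 1), show a + 1 + b + 1 = a + (b + 1) + 1 from by omega]

lemma offdiag (χ : Polynomial ℂ) (n : ℕ) (hn : 0 < n) (hdeg : χ.natDegree ≤ n) (x y : ℂ)
    (hxy : x ≠ y) (Kx Ky : ℕ)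
    (hx : ∀ m, m < Kx → (hasseDeriv m χ).eval x = 0)
    (hy : ∀ m, m < Ky → (hasseDeriv m χ).eval y = 0) :
    ∀ a, a < Kx → ∀ b, b < Ky → Fv χ n x y a b = 0 := by
  have hsub : x - y ≠ 0 := sub_ne_zero.mpr hxy
  intro a
  induction a with
  | zero =>
    intro ha b
    induction b with
    | zero =>
      intro hb
      have h := rec0a χ n hn hdeg x y
      have hx0 := hx 0 ha
      have hy0 := hy 0 hb
      rw [hasseDeriv_zero, LinearMap.id_apply] at hx0
      rw [hx0, hy0, sub_zero] at h
      exact (mul_eq_zero.mp h).resolve_left hsub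
    | succ b ihb =>
      intro hb
      have h := rec0b χ n hn hdeg x y b
      rw [ihb (lt_trans (Nat.lt_succ_self b) hb), sub_zero, hy (b + 1) hb, neg_zero] at h
      exact (mul_eq_zero.mp h).resolve_left hsub
  | succ a iha =>
    intro ha b
    induction b with
    | zero =>
      intro hb
      have h := recSa χ n hn hdeg x y a
      rw [iha (lt_trans (Nat.lt_succ_self a) ha) 0 hb, add_zero, hx (a + 1) ha] at h
      exact (mul_eq_zero.mp h).resolve_left hsub
    | succ b ihb =>
      intro hb
      have h := recSb χ n hn hdeg x y a b
      rw [ihb (lt_trans (Nat.lt_succ_self b) hb), sub_zero,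
        iha (lt_trans (Nat.lt_succ_self a) ha) (b + 1) hb, add_zero] at h
      exact (mul_eq_zero.mp h).resolve_left hsub

lemma div_fact_eval (u : ℕ) (p : Polynomial ℂ) (z : ℂ) :
    (1 / (u.factorial : ℂ)) * (derivative^[u] p).eval z = (hasseDeriv u p).eval z := by
  have h : derivative^[u] p = u.factorial • hasseDeriv u p := by
    rw [← Polynomial.factorial_smul_hasseDeriv]
    rfl
  rw [h, nsmul_eq_mul, eval_mul, eval_natCast, ← mul_assoc,
    one_div_mul_cancel (Nat.cast_ne_zero.mpr u.factorial_ne_zero), one_mul]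

lemma taylor_shift (r : ℂ) (K : ℕ) (g : Polynomial ℂ) :
    (taylor r) ((X - C r) ^ K * g) = X ^ K * (taylor r) g := by
  rw [taylor_mul]
  congr 1
  rw [taylor_apply, pow_comp, sub_comp, X_comp, C_comp, add_sub_cancel_right]

lemma hasse_root (χ g : Polynomial ℂ) (r : ℂ) (K : ℕ) (hfac : χ = (X - C r) ^ K * g) :
    ∀ m, m < K → (hasseDeriv m χ).eval r = 0 := by
  intro m hm
  rw [← taylor_coeff, hfac, taylor_shift, coeff_X_pow_mul', if_neg (by omega)]

lemma hasse_shift (χ g : Polynomial ℂ) (r : ℂ) (K : ℕ) (hfac : χ = (X - C r) ^ K * g)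
    (d : ℕ) : (hasseDeriv (K + d) χ).eval r = (hasseDeriv d g).eval r := by
  rw [← taylor_coeff, hfac, taylor_shift, show K + d = d + K from by omega,
    coeff_X_pow_mul, taylor_coeff]

end HKaux


/-- Let `χ` be monic of degree `n` with distinct roots `μ j` of multiplicities `k j`.
Let `K⁻¹` be the matrix of generalized eigenvector blocks (divided derivatives of the Horner
eigenvectors) and `H` the generalized Vandermonde matrix (divided derivatives of the rows
`r(μ j) = (1, μ j, ..., μ jⁿ⁻¹)`, ordered from bottom to top).  Then `A := H·K⁻¹` is
block-diagonal, with upper-triangular Toeplitz blocks whose entries are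
`a_{j,t-s} = (1/(k j + (t-s))!)·χ^{(k j + (t-s))}(μ j)`, equivalently
`(1/(t-s)!)·χⱼ^{(t-s)}(μ j)` where `χⱼ(X) = χ(X)/(X - μ j)^{k j}`. -/
theorem H_mul_Kinv_block_toeplitz (ℓ n : ℕ) (μ : Fin ℓ → ℂ) (hμ : Function.Injective μ)
    (k : Fin ℓ → ℕ) (hk : ∀ j, 1 ≤ k j) (hn : ∑ j, k j = n)
    (χ : Polynomial ℂ) (hχ : χ = ∏ j, (X - C (μ j)) ^ k j)
    (H : Matrix ((j : Fin ℓ) × Fin (k j)) (Fin n) ℂ)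
    (hH : ∀ (j : Fin ℓ) (s : Fin (k j)) (m : Fin n),
      H ⟨j, s⟩ m = (1 / (Nat.factorial (k j - 1 - (s : ℕ)) : ℂ)) *
        (derivative^[k j - 1 - (s : ℕ)] (X ^ (m : ℕ) : Polynomial ℂ)).eval (μ j))
    (Kinv : Matrix (Fin n) ((j : Fin ℓ) × Fin (k j)) ℂ)
    (hKinv : ∀ (i : Fin n) (j : Fin ℓ) (s : Fin (k j)),
      Kinv i ⟨j, s⟩ = (1 / (Nat.factorial (s : ℕ) : ℂ)) *
        (derivative^[(s : ℕ)] (hornerPoly n χ i)).eval (μ j)) :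
    (∀ (j j' : Fin ℓ), j ≠ j' → ∀ (s : Fin (k j)) (t : Fin (k j')),
        (H * Kinv) ⟨j, s⟩ ⟨j', t⟩ = 0) ∧
    (∀ (j : Fin ℓ) (s t : Fin (k j)),
        (H * Kinv) ⟨j, s⟩ ⟨j, t⟩ =
          if (s : ℕ) ≤ (t : ℕ) then
            (1 / (Nat.factorial (k j + ((t : ℕ) - (s : ℕ))) : ℂ)) *
              (derivative^[k j + ((t : ℕ) - (s : ℕ))] χ).eval (μ j)
          else 0) ∧
    (∀ (j : Fin ℓ) (s t : Fin (k j)),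
        (H * Kinv) ⟨j, s⟩ ⟨j, t⟩ =
          if (s : ℕ) ≤ (t : ℕ) then
            (1 / (Nat.factorial ((t : ℕ) - (s : ℕ)) : ℂ)) *
              (derivative^[(t : ℕ) - (s : ℕ)]
                (∏ l ∈ Finset.univ.erase j, (X - C (μ l)) ^ k l)).eval (μ j)
          else 0) := by
  classical
  have hdeg : χ.natDegree ≤ n := by
    rw [hχ]
    rw [Polynomial.natDegree_prod _ _ (fun j _ => pow_ne_zero _ (X_sub_C_ne_zero (μ j)))]
    simp only [natDegree_pow, natDegree_X_sub_C, mul_one]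
    exact le_of_eq hn
  have hnpos : Fin ℓ → 0 < n := fun j => by
    have h1 : k j ≤ ∑ i, k i :=
      Finset.single_le_sum (f := k) (fun i _ => Nat.zero_le _) (Finset.mem_univ j)
    have := hk j
    omega
  have hfac : ∀ j : Fin ℓ,
      χ = (X - C (μ j)) ^ k j * ∏ l ∈ Finset.univ.erase j, (X - C (μ l)) ^ k l := by
    intro j
    rw [hχ, Finset.mul_prod_erase Finset.univ (fun l => (X - C (μ l)) ^ k l)
      (Finset.mem_univ j)]
  -- the matrix entry equals the mixed Hasse derivative `Fv`
  have hF : ∀ (j j' : Fin ℓ) (s : Fin (k j)) (t : Fin (k j')),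
      (H * Kinv) ⟨j, s⟩ ⟨j', t⟩ = HKaux.Fv χ n (μ j) (μ j') (k j - 1 - (s : ℕ)) (t : ℕ) := by
    intro j j' s t
    rw [Matrix.mul_apply]
    unfold HKaux.Fv
    unfold HKaux.WP
    rw [map_sum, eval_finset_sum]
    rw [← Fin.sum_univ_eq_sum_range (fun m =>
      ((hasseDeriv (t : ℕ)) (C ((m.choose (k j - 1 - (s : ℕ)) : ℂ) * μ j ^ (m - (k j - 1 - (s : ℕ)))) *
        HKaux.eP χ n m)).eval (μ j')) n]
    refine Finset.sum_congr rfl fun m _ => ?_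
    rw [hH j s m, hKinv m j' t]
    rw [HKaux.div_fact_eval, HKaux.div_fact_eval]
    have hhorner : hornerPoly n χ m = HKaux.eP χ n (m : ℕ) := rfl
    rw [hhorner]
    rw [X_pow_eq_monomial, hasseDeriv_monomial, eval_monomial]
    rw [← smul_eq_C_mul, map_smul, smul_eq_C_mul, eval_mul, eval_C]
    ring
  -- off-diagonal vanishing
  have part1 : ∀ (j j' : Fin ℓ), j ≠ j' → ∀ (s : Fin (k j)) (t : Fin (k j')),
      (H * Kinv) ⟨j, s⟩ ⟨j', t⟩ = 0 := by
    intro j j' hjj' s t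
    rw [hF j j' s t]
    exact HKaux.offdiag χ n (hnpos j) hdeg (μ j) (μ j')
      (fun h => hjj' (hμ h)) (k j) (k j')
      (HKaux.hasse_root χ _ (μ j) (k j) (hfac j))
      (HKaux.hasse_root χ _ (μ j') (k j') (hfac j'))
      (k j - 1 - (s : ℕ)) (by have := s.isLt; have := hk j; omega)
      (t : ℕ) t.isLt
  -- diagonal entries, χ-form
  have part2 : ∀ (j : Fin ℓ) (s t : Fin (k j)),
      (H * Kinv) ⟨j, s⟩ ⟨j, t⟩ =
        if (s : ℕ) ≤ (t : ℕ) then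
          (1 / (Nat.factorial (k j + ((t : ℕ) - (s : ℕ))) : ℂ)) *
            (derivative^[k j + ((t : ℕ) - (s : ℕ))] χ).eval (μ j)
        else 0 := by
    intro j s t
    rw [hF j j s t, HKaux.diag χ n (hnpos j) hdeg (μ j) (t : ℕ) (k j - 1 - (s : ℕ))]
    have hs := s.isLt
    have ht := t.isLt
    split_ifs with hst
    · rw [HKaux.div_fact_eval, show k j - 1 - (s : ℕ) + (t : ℕ) + 1
        = k j + ((t : ℕ) - (s : ℕ)) from by omega]
    · exact HKaux.hasse_root χ _ (μ j) (k j) (hfac j) _ (by omega)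
  refine ⟨part1, part2, ?_⟩
  intro j s t
  rw [part2 j s t]
  split_ifs with hst
  · rw [HKaux.div_fact_eval, HKaux.div_fact_eval]
    exact HKaux.hasse_shift χ _ (μ j) (k j) (hfac j) ((t : ℕ) - (s : ℕ))
  · rfl
end

section
/- Suppose (S_+, S_-) and (S_+', S_-') are pairs with S_+ = [[1_{n-1}, z],[0,1]], S_- = M·[[1_{n-1},0],[e,1]] and S_+' = [[1_{n-1}, z'],[0,1]], S_-' = M·[[1_{n-1},0],[e,1]], where M = diag(J̃, c) with J̃ ∈ GL_{n-1}(ℂ) in Jordan normal form (with distinct eigenvalues λ_1,...,λ_ℓ and one Jordan block per eigenvalue), c ∈ ℂ^×, and e = (1,0,...,0 | 1,0,...,0 | ... | 1,0,...,0) with blocks matching the Jordan block sizes. If there exist invertible block-diagonal matrices A, B ∈ GL_{n-1}(ℂ) × GL_1(ℂ) (A additionally block-diagonal with respect to the generalized eigenspace decomposition of J̃) with S_+' = A S_+ A⁻¹ and S_-' = A S_- A⁻¹, then z = z'. -/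
private lemma jordan_row_aux {ℓ : ℕ} {κ : Fin ℓ → ℕ} (μ : Fin ℓ → ℂ)
    (p r : (j : Fin ℓ) × Fin (κ j)) :
    (if p.1 = r.1 then
        (if (p.2 : ℕ) = (r.2 : ℕ) then μ p.1
          else if (r.2 : ℕ) = (p.2 : ℕ) + 1 then 1 else 0)
      else 0)
    = (if r = p then μ p.1 else 0) +
      (if h : (p.2 : ℕ) + 1 < κ p.1 then
        (if r = ⟨p.1, ⟨(p.2 : ℕ) + 1, h⟩⟩ then 1 else 0) else 0) := by
  obtain ⟨j1, x⟩ := p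
  obtain ⟨j2, y⟩ := r
  by_cases hj : j1 = j2
  · subst hj
    have hx := x.isLt
    have hy := y.isLt
    simp only [Sigma.mk.inj_iff, heq_eq_eq, true_and, Fin.ext_iff, if_pos rfl]
    split_ifs <;> first | omega | simp
  · have h1 : (⟨j2, y⟩ : (j : Fin ℓ) × Fin (κ j)) ≠ ⟨j1, x⟩ := by
      simp only [ne_eq, Sigma.mk.inj_iff, not_and]
      intro h; exact absurd h.symm hj
    simp only [if_neg hj, if_neg h1, zero_add]
    split
    · rw [if_neg]
      simp only [ne_eq, Sigma.mk.inj_iff, not_and]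
      intro h; exact absurd h.symm hj
    · rfl

private lemma jordan_col_aux {ℓ : ℕ} {κ : Fin ℓ → ℕ} (μ : Fin ℓ → ℂ)
    (r q : (j : Fin ℓ) × Fin (κ j)) :
    (if r.1 = q.1 then
        (if (r.2 : ℕ) = (q.2 : ℕ) then μ r.1
          else if (q.2 : ℕ) = (r.2 : ℕ) + 1 then 1 else 0)
      else 0)
    = (if r = q then μ q.1 else 0) +
      (if h : 1 ≤ (q.2 : ℕ) then
        (if r = ⟨q.1, ⟨(q.2 : ℕ) - 1, by omega⟩⟩ then 1 else 0) else 0) := by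
  obtain ⟨j1, y⟩ := r
  obtain ⟨j2, x⟩ := q
  by_cases hj : j1 = j2
  · subst hj
    have hx := x.isLt
    have hy := y.isLt
    simp only [Sigma.mk.inj_iff, heq_eq_eq, true_and, Fin.ext_iff, if_pos rfl]
    split_ifs <;> first | omega | simp
  · have h1 : (⟨j1, y⟩ : (j : Fin ℓ) × Fin (κ j)) ≠ ⟨j2, x⟩ := by
      simp only [ne_eq, Sigma.mk.inj_iff, not_and]
      intro h; exact absurd h hj
    simp only [if_neg hj, if_neg h1, zero_add]
    split
    · rw [if_neg]
      simp only [ne_eq, Sigma.mk.inj_iff, not_and]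
      intro h; exact absurd h hj
    · rfl

/-- **Uniqueness of the normal form of the Stokes pair.**
Let `J̃` be a Jordan matrix with distinct eigenvalues `μ j` and one Jordan block of size
`κ j` per eigenvalue, `M = diag(J̃, c)`, and `e` the row vector with a `1` in the first
coordinate of each Jordan block.  If the normal-form pairs
`(S₊ = [[1,z],[0,1]], S₋ = M·[[1,0],[e,1]])` and `(S₊' = [[1,z'],[0,1]], S₋' = S₋)` are
conjugate by an invertible block-diagonal matrix `A = diag(A₀, a)` with `A₀` additionally
block-diagonal with respect to the generalized eigenspaces of `J̃`, then `z = z'`. -/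
theorem stokes_normal_form_unique (ℓ : ℕ) (κ : Fin ℓ → ℕ) (hκ : ∀ j, 1 ≤ κ j)
    (μ : Fin ℓ → ℂ) (hμ : Function.Injective μ) (c : ℂ) (hc : c ≠ 0)
    (z z' : ((j : Fin ℓ) × Fin (κ j)) → ℂ)
    -- the Jordan matrix J̃ :
    (Jt : Matrix ((j : Fin ℓ) × Fin (κ j)) ((j : Fin ℓ) × Fin (κ j)) ℂ)
    (hJt : ∀ p q : (j : Fin ℓ) × Fin (κ j),
      Jt p q = if p.1 = q.1 then
          (if (p.2 : ℕ) = (q.2 : ℕ) then μ p.1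
            else if (q.2 : ℕ) = (p.2 : ℕ) + 1 then 1 else 0)
        else 0)
    -- the row vector e :
    (e : ((j : Fin ℓ) × Fin (κ j)) → ℂ) (he : ∀ p, e p = if (p.2 : ℕ) = 0 then 1 else 0)
    -- the block-diagonal base change A = diag(A₀, a), A₀ respecting the eigenspaces of J̃ :
    (A₀ : Matrix ((j : Fin ℓ) × Fin (κ j)) ((j : Fin ℓ) × Fin (κ j)) ℂ)
    (hA₀ : ∀ p q : (j : Fin ℓ) × Fin (κ j), p.1 ≠ q.1 → A₀ p q = 0)
    (a : ℂ)
    (Ainv : Matrix ((j : Fin ℓ) × Fin (κ j) ⊕ Unit) ((j : Fin ℓ) × Fin (κ j) ⊕ Unit) ℂ)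
    (hAinv₁ : Matrix.fromBlocks A₀ 0 0 (Matrix.of fun _ _ => a) * Ainv = 1)
    (hAinv₂ : Ainv * Matrix.fromBlocks A₀ 0 0 (Matrix.of fun _ _ => a) = 1)
    -- conjugation relations :
    (hplus : Matrix.fromBlocks 1 (Matrix.of fun i (_ : Unit) => z' i) 0 1
      = Matrix.fromBlocks A₀ 0 0 (Matrix.of fun _ _ => a) *
          Matrix.fromBlocks 1 (Matrix.of fun i (_ : Unit) => z i) 0 1 * Ainv)
    (hminus : Matrix.fromBlocks Jt 0 0 (Matrix.of fun _ _ => c) *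
          Matrix.fromBlocks 1 0 (Matrix.of fun (_ : Unit) i => e i) 1
      = Matrix.fromBlocks A₀ 0 0 (Matrix.of fun _ _ => a) *
          (Matrix.fromBlocks Jt 0 0 (Matrix.of fun _ _ => c) *
            Matrix.fromBlocks 1 0 (Matrix.of fun (_ : Unit) i => e i) 1) * Ainv) :
    z = z' := by
  classical
  -- a ≠ 0
  have ha : a ≠ 0 := by
    have h := congrFun (congrFun hAinv₂ (Sum.inr ())) (Sum.inr ())
    simp [Matrix.mul_apply, Fintype.sum_sum_type, Matrix.fromBlocks] at h
    intro h0
    rw [h0] at h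
    simp at h
  -- S₊ relation : A₀ * z = a * z'
  have hz : ∀ p, z' p * a = ∑ r, A₀ p r * z r := by
    have h : Matrix.fromBlocks 1 (Matrix.of fun i (_ : Unit) => z' i) 0 1 *
        Matrix.fromBlocks A₀ 0 0 (Matrix.of fun (_ : Unit) (_ : Unit) => a)
        = Matrix.fromBlocks A₀ 0 0 (Matrix.of fun (_ : Unit) (_ : Unit) => a) *
          Matrix.fromBlocks 1 (Matrix.of fun i (_ : Unit) => z i) 0 1 := by
      rw [hplus, Matrix.mul_assoc, hAinv₂, Matrix.mul_one]
    intro p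
    have h2 := congrFun (congrFun h (Sum.inl p)) (Sum.inr ())
    simpa [Matrix.mul_apply, Fintype.sum_sum_type, Matrix.fromBlocks] using h2
  -- S₋ relation
  have hM := congrArg
    (fun X : Matrix ((j : Fin ℓ) × Fin (κ j) ⊕ Unit) ((j : Fin ℓ) × Fin (κ j) ⊕ Unit) ℂ =>
      X * Matrix.fromBlocks A₀ 0 0 (Matrix.of fun (_ : Unit) (_ : Unit) => a)) hminus
  rw [Matrix.mul_assoc _ Ainv, hAinv₂, Matrix.mul_one] at hM
  -- commutation
  have Hcomm : ∀ p q, (∑ r, Jt p r * A₀ r q) = ∑ r, A₀ p r * Jt r q := by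
    intro p q
    have h2 := congrFun (congrFun hM (Sum.inl p)) (Sum.inl q)
    simpa [Matrix.mul_apply, Fintype.sum_sum_type, Matrix.fromBlocks, Finset.mul_sum,
      Finset.sum_mul, Matrix.one_apply, mul_ite, ite_mul, Finset.sum_ite_eq,
      Finset.sum_ite_eq'] using h2
  -- row condition
  have Hrow : ∀ q, (∑ r, e r * A₀ r q) = a * e q := by
    intro q
    have h2 := congrFun (congrFun hM (Sum.inr ())) (Sum.inl q)
    simp [Matrix.mul_apply, Fintype.sum_sum_type, Matrix.fromBlocks, Finset.mul_sum,
      Finset.sum_mul, Matrix.one_apply, mul_ite, ite_mul, Finset.sum_ite_eq,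
      Finset.sum_ite_eq'] at h2
    have h3 : c * (∑ r, e r * A₀ r q) = c * (a * e q) := by
      rw [Finset.mul_sum, show c * (a * e q) = a * (c * e q) by ring, ← h2]
      exact Finset.sum_congr rfl fun r _ => by ring
    exact mul_left_cancel₀ hc h3
  have eJ1 : ∀ p r : (j : Fin ℓ) × Fin (κ j), Jt p r =
      (if r = p then μ p.1 else 0) +
      (if h : (p.2 : ℕ) + 1 < κ p.1 then
        (if r = ⟨p.1, ⟨(p.2 : ℕ) + 1, h⟩⟩ then 1 else 0) else 0) := by
    intro p r
    rw [hJt]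
    exact jordan_row_aux μ p r
  have eJ2 : ∀ r q : (j : Fin ℓ) × Fin (κ j), Jt r q =
      (if r = q then μ q.1 else 0) +
      (if h : 1 ≤ (q.2 : ℕ) then
        (if r = ⟨q.1, ⟨(q.2 : ℕ) - 1, by omega⟩⟩ then 1 else 0) else 0) := by
    intro r q
    rw [hJt]
    exact jordan_col_aux μ r q
  -- shift relation from commutation
  have key : ∀ (j : Fin ℓ) (x y : Fin (κ j)),
      (if h : (x : ℕ) + 1 < κ j then A₀ ⟨j, ⟨(x : ℕ) + 1, h⟩⟩ ⟨j, y⟩ else 0)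
      = (if h : 1 ≤ (y : ℕ) then A₀ ⟨j, x⟩ ⟨j, ⟨(y : ℕ) - 1, by omega⟩⟩ else 0) := by
    intro j x y
    have hL : (∑ r, Jt ⟨j, x⟩ r * A₀ r ⟨j, y⟩)
        = μ j * A₀ ⟨j, x⟩ ⟨j, y⟩ +
          (if h : (x : ℕ) + 1 < κ j then A₀ ⟨j, ⟨(x : ℕ) + 1, h⟩⟩ ⟨j, y⟩ else 0) := by
      simp only [eJ1, add_mul, ite_mul, dite_mul, zero_mul, one_mul,
        Finset.sum_add_distrib, Finset.sum_ite_eq, Finset.sum_ite_eq', Finset.mem_univ,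
        if_true, Finset.sum_dite_irrel, Finset.sum_const_zero]
    have hR : (∑ r, A₀ ⟨j, x⟩ r * Jt r ⟨j, y⟩)
        = A₀ ⟨j, x⟩ ⟨j, y⟩ * μ j +
          (if h : 1 ≤ (y : ℕ) then A₀ ⟨j, x⟩ ⟨j, ⟨(y : ℕ) - 1, by omega⟩⟩ else 0) := by
      simp only [eJ2, mul_add, mul_ite, mul_dite, mul_zero, mul_one,
        Finset.sum_add_distrib, Finset.sum_ite_eq, Finset.sum_ite_eq', Finset.mem_univ,
        if_true, Finset.sum_dite_irrel, Finset.sum_const_zero]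
    have h := Hcomm ⟨j, x⟩ ⟨j, y⟩
    rw [hL, hR, mul_comm] at h
    exact add_left_cancel h
  -- first row of each Jordan block of A₀
  have base : ∀ (j : Fin ℓ) (y : Fin (κ j)),
      A₀ ⟨j, ⟨0, hκ j⟩⟩ ⟨j, y⟩ = if 0 = (y : ℕ) then a else 0 := by
    intro j y
    have h := Hrow ⟨j, y⟩
    rw [Finset.sum_eq_single (⟨j, ⟨0, hκ j⟩⟩ : (j : Fin ℓ) × Fin (κ j))] at h
    · rw [he, he] at h
      simp only [Fin.val_mk, eq_self_iff_true, if_true, one_mul] at h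
      rw [h]
      by_cases hy : (y : ℕ) = 0
      · rw [if_pos hy, if_pos hy.symm, mul_one]
      · rw [if_neg hy, if_neg (fun hh => hy hh.symm), mul_zero]
    · rintro ⟨j', w⟩ - hne
      by_cases hw : (w : ℕ) = 0
      · by_cases hj' : j' = j
        · subst hj'
          exact absurd (congrArg (fun v => (⟨j', v⟩ : (j : Fin ℓ) × Fin (κ j)))
            (Fin.ext hw)) hne
        · rw [hA₀ _ _ (by simpa using hj'), mul_zero]
      · rw [he, if_neg hw, zero_mul]
    · intro hmem
      exact absurd (Finset.mem_univ _) hmem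
  -- all of A₀ within a block
  have main : ∀ (j : Fin ℓ) (n : ℕ) (hn : n < κ j) (y : Fin (κ j)),
      A₀ ⟨j, ⟨n, hn⟩⟩ ⟨j, y⟩ = if n = (y : ℕ) then a else 0 := by
    intro j n
    induction n with
    | zero => intro hn y; exact base j y
    | succ n ih =>
      intro hn y
      have hnk : n < κ j := by omega
      have h := key j ⟨n, hnk⟩ y
      rw [dif_pos (show ((⟨n, hnk⟩ : Fin (κ j)) : ℕ) + 1 < κ j from hn)] at h
      by_cases hy : 1 ≤ (y : ℕ)
      · rw [dif_pos hy] at h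
        rw [h, ih hnk]
        by_cases hny : n + 1 = (y : ℕ)
        · rw [if_pos (show n = ((⟨(y : ℕ) - 1, by omega⟩ : Fin (κ j)) : ℕ) by
            simp; omega), if_pos hny]
        · rw [if_neg (show ¬ n = ((⟨(y : ℕ) - 1, by omega⟩ : Fin (κ j)) : ℕ) by
            simp; omega), if_neg hny]
      · rw [dif_neg hy] at h
        rw [h, if_neg (by omega)]
  -- A₀ is the scalar matrix a • 1
  have hfull : ∀ p r : (j : Fin ℓ) × Fin (κ j), A₀ p r = if p = r then a else 0 := by
    rintro ⟨j1, x⟩ ⟨j2, y⟩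
    by_cases hj : j1 = j2
    · subst hj
      have h := main j1 (x : ℕ) x.isLt y
      simp only [Fin.eta] at h
      rw [h]
      by_cases hxy : (x : ℕ) = (y : ℕ)
      · rw [if_pos hxy, if_pos (by simp [Sigma.mk.inj_iff, Fin.ext_iff, hxy])]
      · rw [if_neg hxy, if_neg (by simp [Sigma.mk.inj_iff, Fin.ext_iff, hxy])]
    · rw [hA₀ _ _ (by simpa using hj),
        if_neg (by simp [Sigma.mk.inj_iff]; intro h; exact absurd h hj)]
  -- conclude
  funext p
  have h := hz p
  rw [Finset.sum_congr rfl (fun r _ => by rw [hfull p r])] at h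
  simp only [ite_mul, zero_mul, Finset.sum_ite_eq, Finset.mem_univ, if_true] at h
  have : z p * a = z' p * a := by rw [h]; ring
  exact mul_right_cancel₀ ha this
end
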